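/- arXiv:0801.1195 — 2 statements merged into one kernel-verified Lean document; each statement's English description precedes it below -/
import Mathlib

section
/- Let a, b ≥ 1 be integers, N = 2^a·3^b, and 0 ≤ k < N. The image of the atom A_k under multiplication by N on G/Γ, computed in F, is a coset rectangle: {rep(N·y) : y ∈ A_k} = [0,1) × {2^a z − k : z ∈ ℤ₂} × {3^b w − k : w ∈ ℤ₃}. -/
/-
For `y ∈ A_k` the point `N·y - Δ k` already lies in `F`, and `F` meets every `Γ`-coset at most
once, because an element of `ℤ[1/6]` that is integral at 2 and at 3 is an integer, and an integer in
`(-1, 1)` is zero. Hence `rep (N·y) = N·y - Δ k`. The map `y ↦ N·y - Δ k` is a bijection of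
`G`; since 3 is a unit in `ℤ₂` and 2 is a unit in `ℤ₃`, it carries `ℤ₂` onto `2^a ℤ₂ - k` and `ℤ₃`
onto `3^b ℤ₃ - k`, and `[k/N, (k+1)/N)` onto `[0, 1)`.
-/

open Set

noncomputable section

/-- The ambient group `G = ℝ × ℚ₂ × ℚ₃`. -/
abbrev G : Type := ℝ × ℚ_[2] × ℚ_[3]

/-- The diagonal embedding of `ℚ` into `G`. -/
def Δ (r : ℚ) : G := ((r : ℝ), (r : ℚ_[2]), (r : ℚ_[3]))

/-- `ℤ[1/6]`, the rationals expressible with denominator `6^k`. -/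
def zInv6 : Set ℚ := {q | ∃ (z : ℤ) (k : ℕ), q = z / 6 ^ k}

/-- `Γ = Δ(ℤ[1/6])`. -/
def Γ : Set G := Δ '' zInv6

/-- The fundamental domain `F = [0,1) × ℤ₂ × ℤ₃`. -/
def F : Set G := {x | x.1 ∈ Set.Ico (0 : ℝ) 1 ∧ ‖x.2.1‖ ≤ 1 ∧ ‖x.2.2‖ ≤ 1}

/-- Coordinatewise multiplication by a rational on `G`. -/
def act (q : ℚ) (x : G) : G :=
  ((q : ℝ) * x.1, (q : ℚ_[2]) * x.2.1, (q : ℚ_[3]) * x.2.2)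

/-- The atom `A_k = [k/N, (k+1)/N) × ℤ₂ × ℤ₃` of the partition `ξ`. -/
def A (N k : ℕ) : Set G :=
  {x | x.1 ∈ Set.Ico ((k : ℝ) / N) (((k : ℝ) + 1) / N) ∧ ‖x.2.1‖ ≤ 1 ∧ ‖x.2.2‖ ≤ 1}

lemma Padic.norm_three_two : ‖(3 : ℚ_[2])‖ = 1 := by
  simpa using Padic.norm_natCast_eq_one_iff (p := 2) (n := 3) |>.2 (by norm_num)

lemma Padic.norm_two_three : ‖(2 : ℚ_[3])‖ = 1 := by
  simpa using Padic.norm_natCast_eq_one_iff (p := 3) (n := 2) |>.2 (by norm_num)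

lemma Padic.not_dvd_den_of_norm_le_one {p : ℕ} [Fact p.Prime] {q : ℚ}
    (hq : ‖(q : ℚ_[p])‖ ≤ 1) : ¬ p ∣ q.den := by
  intro hp
  have hnum : ‖(q.num : ℚ_[p])‖ = 1 := by
    rw [Padic.norm_intCast_eq_one_iff, Int.isCoprime_iff_gcd_eq_one]
    exact Nat.Coprime.coprime_dvd_right hp q.reduced
  have hden : ‖(q.den : ℚ_[p])‖ < 1 := Padic.norm_natCast_lt_one_iff.2 hp
  have hden0 : 0 < ‖(q.den : ℚ_[p])‖ := norm_pos_iff.2 (by exact_mod_cast q.den_nz)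
  rw [← Rat.num_div_den q, Rat.cast_div, norm_div, Rat.cast_intCast, Rat.cast_natCast,
    hnum] at hq
  exact ((div_le_one hden0).1 hq).not_gt hden

lemma norm_inv_mul_add_le_one_iff {K : Type*} [NormedField K] {m c : K} (hm : m ≠ 0)
    (hc : ‖c‖ = 1) (s t : K) :
    ‖(m * c)⁻¹ * (s + t)‖ ≤ 1 ↔ ∃ z, ‖z‖ ≤ 1 ∧ s = m * z - t := by
  have hc0 : c ≠ 0 := norm_ne_zero_iff.1 (by simp [hc])
  constructor
  · intro h
    refine ⟨m⁻¹ * (s + t), ?_, by field_simp; ring⟩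
    simpa [norm_mul, hc, mul_assoc] using h
  · rintro ⟨z, hz, rfl⟩
    simpa [norm_mul, hc, hm, hc0] using hz

lemma inv_mul_add_mem_Ico_div_iff {N s k : ℝ} (hN : 0 < N) :
    N⁻¹ * (s + k) ∈ Ico (k / N) ((k + 1) / N) ↔ s ∈ Ico 0 1 := by
  simp only [inv_mul_eq_div, mem_Ico, div_le_div_iff_of_pos_right hN,
    div_lt_div_iff_of_pos_right hN, add_comm s k, le_add_iff_nonneg_right, add_lt_add_iff_left]

lemma natCast_mem_zInv6 (n : ℕ) : (n : ℚ) ∈ zInv6 := ⟨n, 0, by simp⟩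

lemma sub_mem_zInv6 {q r : ℚ} (hq : q ∈ zInv6) (hr : r ∈ zInv6) : q - r ∈ zInv6 := by
  obtain ⟨z, m, rfl⟩ := hq
  obtain ⟨w, n, rfl⟩ := hr
  refine ⟨z * 6 ^ n - w * 6 ^ m, m + n, ?_⟩
  push_cast
  field_simp
  ring

lemma exists_den_dvd_six_pow_of_mem_zInv6 {q : ℚ} (hq : q ∈ zInv6) :
    ∃ m : ℕ, q.den ∣ 6 ^ m := by
  obtain ⟨z, m, rfl⟩ := hq
  refine ⟨m, ?_⟩
  have h := Rat.den_dvd z (6 ^ m)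
  rw [Rat.divInt_eq_div] at h
  exact_mod_cast h

lemma den_eq_one_of_mem_zInv6 {q : ℚ} (hq : q ∈ zInv6) (h2 : ‖(q : ℚ_[2])‖ ≤ 1)
    (h3 : ‖(q : ℚ_[3])‖ ≤ 1) : q.den = 1 := by
  obtain ⟨m, hm⟩ := exists_den_dvd_six_pow_of_mem_zInv6 hq
  have hcop2 : Nat.Coprime q.den 2 :=
    ((Nat.Prime.coprime_iff_not_dvd Nat.prime_two).2 (Padic.not_dvd_den_of_norm_le_one h2)).symm
  have hcop3 : Nat.Coprime q.den 3 :=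
    ((Nat.Prime.coprime_iff_not_dvd Nat.prime_three).2 (Padic.not_dvd_den_of_norm_le_one h3)).symm
  exact Nat.Coprime.eq_one_of_dvd ((hcop2.mul_right hcop3).pow_right m) hm

lemma Δ_sub (q r : ℚ) : Δ (q - r) = Δ q - Δ r := by
  simp [Δ]

lemma sub_mem_Γ {x y : G} (hx : x ∈ Γ) (hy : y ∈ Γ) : x - y ∈ Γ := by
  obtain ⟨q, hq, rfl⟩ := hx
  obtain ⟨r, hr, rfl⟩ := hy
  exact ⟨q - r, sub_mem_zInv6 hq hr, Δ_sub q r⟩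

lemma eq_of_sub_mem_Γ {u v : G} (hu : u ∈ F) (hv : v ∈ F) (h : u - v ∈ Γ) : u = v := by
  obtain ⟨q, hq, hquv⟩ := h
  obtain ⟨⟨hu0, hu1⟩, hu2, hu3⟩ := hu
  obtain ⟨⟨hv0, hv1⟩, hv2, hv3⟩ := hv
  have h1 : (q : ℝ) = u.1 - v.1 := congrArg Prod.fst hquv
  have h2 : (q : ℚ_[2]) = u.2.1 - v.2.1 := congrArg (·.2.1) hquv
  have h3 : (q : ℚ_[3]) = u.2.2 - v.2.2 := congrArg (·.2.2) hquv
  have hden : q.den = 1 := den_eq_one_of_mem_zInv6 hq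
    (h2 ▸ (PadicInt.mem_subring_iff 2).1 (sub_mem hu2 hv2))
    (h3 ▸ (PadicInt.mem_subring_iff 3).1 (sub_mem hu3 hv3))
  have hq0 : q = 0 := by
    have hnum : (q.num : ℚ) = q := (Rat.den_eq_one_iff q).1 hden
    have habs : |((q.num : ℚ) : ℝ)| < 1 := by
      rw [hnum, h1, abs_lt]
      constructor <;> linarith
    have hnum0 : q.num = 0 := Int.abs_lt_one_iff.1 (by exact_mod_cast habs)
    rw [← hnum, hnum0, Int.cast_zero]
  simpa [hq0, Δ, Prod.mk_zero_zero, sub_eq_zero] using hquv.symm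

lemma rep_eq_of_sub_mem_Γ {rep : G → G} (hrep : ∀ x : G, rep x ∈ F ∧ x - rep x ∈ Γ) {x u : G}
    (hu : u ∈ F) (h : x - u ∈ Γ) : rep x = u :=
  eq_of_sub_mem_Γ (hrep x).1 hu (by simpa using sub_mem_Γ h (hrep x).2)

lemma act_act (q r : ℚ) (x : G) : act q (act r x) = act (q * r) x := by
  simp [act, mul_assoc]

lemma act_one (x : G) : act 1 x = x := by
  simp [act]

def cosetRect (a b k : ℕ) : Set G :=
  {u : G | u.1 ∈ Set.Ico (0 : ℝ) 1 ∧
    (∃ z : ℚ_[2], ‖z‖ ≤ 1 ∧ u.2.1 = 2 ^ a * z - (k : ℚ_[2])) ∧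
    (∃ w : ℚ_[3], ‖w‖ ≤ 1 ∧ u.2.2 = 3 ^ b * w - (k : ℚ_[3]))}

lemma cosetRect_subset_F (a b k : ℕ) : cosetRect a b k ⊆ F := by
  rintro u ⟨hu1, ⟨z, hz, hu2⟩, ⟨w, hw, hu3⟩⟩
  refine ⟨hu1, hu2 ▸ (PadicInt.mem_subring_iff 2).1 ?_, hu3 ▸ (PadicInt.mem_subring_iff 3).1 ?_⟩
  · exact sub_mem (mul_mem (pow_mem (ofNat_mem _ 2) a) hz) (natCast_mem _ k)
  · exact sub_mem (mul_mem (pow_mem (ofNat_mem _ 3) b) hw) (natCast_mem _ k)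

lemma image_act_sub_Δ_A {a b N : ℕ} (hN : N = 2 ^ a * 3 ^ b) (k : ℕ) :
    (fun y => act N y - Δ k) '' A N k = cosetRect a b k := by
  have hN0 : (N : ℚ) ≠ 0 := by rw [hN]; positivity
  rw [image_eq_preimage_of_inverse (g := fun u => act (N : ℚ)⁻¹ (u + Δ k))]
  · ext u
    simp only [mem_preimage, A, cosetRect, mem_ofPred_eq, act, Δ, Prod.fst_add, Prod.snd_add]
    subst hN
    push_cast
    refine and_congr (inv_mul_add_mem_Ico_div_iff (by positivity)) (and_congr ?_ ?_)
    · exact norm_inv_mul_add_le_one_iff (pow_ne_zero _ two_ne_zero)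
        (by simp [Padic.norm_three_two]) _ _
    · rw [mul_comm ((2 : ℚ_[3]) ^ a)]
      exact norm_inv_mul_add_le_one_iff (pow_ne_zero _ three_ne_zero)
        (by simp [Padic.norm_two_three]) _ _
  · intro y
    simp only [sub_add_cancel, act_act, inv_mul_cancel₀ hN0, act_one]
  · intro u
    simp only [act_act, mul_inv_cancel₀ hN0, act_one, add_sub_cancel_right]

theorem image_atom_general (rep : G → G) (hrep : ∀ x : G, rep x ∈ F ∧ x - rep x ∈ Γ)
    (a b : ℕ) (N : ℕ) (hN : N = 2 ^ a * 3 ^ b)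
    (k : ℕ) :
    (fun y => rep (act (N : ℚ) y)) '' A N k =
      {u : G | u.1 ∈ Set.Ico (0 : ℝ) 1 ∧
        (∃ z : ℚ_[2], ‖z‖ ≤ 1 ∧ u.2.1 = 2 ^ a * z - (k : ℚ_[2])) ∧
        (∃ w : ℚ_[3], ‖w‖ ≤ 1 ∧ u.2.2 = 3 ^ b * w - (k : ℚ_[3]))} := by
  have hrep_eq : ∀ y ∈ A N k, rep (act N y) = act N y - Δ k := by
    intro y hy
    refine rep_eq_of_sub_mem_Γ hrep
      (cosetRect_subset_F a b k (image_act_sub_Δ_A hN k ▸ mem_image_of_mem _ hy)) ?_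
    rw [sub_sub_cancel]
    exact ⟨k, natCast_mem_zInv6 k, rfl⟩
  rw [image_congr hrep_eq]
  exact image_act_sub_Δ_A hN k

/-- The image of the atom `A_k` under multiplication by `N = 2^a 3^b` on `G/Γ`,
computed in `F` via the representative map `rep`, is the coset rectangle
`[0,1) × (2^a ℤ₂ - k) × (3^b ℤ₃ - k)`. -/
theorem image_atom (rep : G → G) (hrep : ∀ x : G, rep x ∈ F ∧ x - rep x ∈ Γ)
    (a b : ℕ) (ha : 1 ≤ a) (hb : 1 ≤ b) (N : ℕ) (hN : N = 2 ^ a * 3 ^ b)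
    (k : ℕ) (hk : k < N) :
    (fun y => rep (act (N : ℚ) y)) '' A N k =
      {u : G | u.1 ∈ Set.Ico (0 : ℝ) 1 ∧
        (∃ z : ℚ_[2], ‖z‖ ≤ 1 ∧ u.2.1 = 2 ^ a * z - (k : ℚ_[2])) ∧
        (∃ w : ℚ_[3], ‖w‖ ≤ 1 ∧ u.2.2 = 3 ^ b * w - (k : ℚ_[3]))} :=
  image_atom_general rep hrep a b N hN k
end
end

section
/- For every x ∈ F, every c ∈ ℤ₃ and every n ∈ ℤ, one has rep(2^n·(x + (0,0,c))) = rep(2^n·x) + (0, 0, 2^n·c), where 2^n·c ∈ ℤ₃ since 2 is a unit in ℤ₃. Consequently, for c ≠ 0 the distinct points x and x + (0,0,c) of F lie in the same atom of the partition ξ^{(1,0)} = {[0,1/2) × ℤ₂ × ℤ₃, [1/2,1) × ℤ₂ × ℤ₃} under every iterate (forward and backward) of multiplication by 2 on G/Γ; in particular ξ^{(1,0)} is not generating for multiplication by 2. -/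
open Set

noncomputable section

/-! Multiplication by `2^n` carries the translation by `(0,0,c)` to the translation by
`(0,0,2^n c)`, and `2^n c ∈ ℤ₃` because `2` is a `3`-adic unit. Translations by `{0} × {0} × ℤ₃`
preserve `F`, and `F` meets every `Γ`-coset at most once (an element of `ℤ[1/6]` that is integral
at `2` and at `3` is an integer, and an integer of absolute value `< 1` is `0`), so `rep` commutes
with these translations. They fix the real coordinate, which alone decides the atom of
`ξ^{(1,0)}`. -/

lemma coprime_den_of_norm_le_one {p : ℕ} [Fact p.Prime] {q : ℚ} (h : ‖(q : ℚ_[p])‖ ≤ 1) :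
    p.Coprime q.den := by
  have hunit := PadicInt.isUnit_den q h
  rwa [PadicInt.isUnit_iff, PadicInt.norm_natCast_eq_one_iff] at hunit

lemma sub_mem_zInv6_s18 {a b : ℚ} (ha : a ∈ zInv6) (hb : b ∈ zInv6) : a - b ∈ zInv6 := by
  obtain ⟨m, k, rfl⟩ := ha
  obtain ⟨n, l, rfl⟩ := hb
  refine ⟨m * 6 ^ l - n * 6 ^ k, k + l, ?_⟩
  field_simp
  push_cast
  ring

lemma sub_mem_Γ_s18 {a b : G} (ha : a ∈ Γ) (hb : b ∈ Γ) : a - b ∈ Γ := by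
  obtain ⟨q, hq, rfl⟩ := ha
  obtain ⟨r, hr, rfl⟩ := hb
  exact ⟨q - r, sub_mem_zInv6_s18 hq hr, by simp [Δ]⟩

lemma norm_sub_le_one {E : Type*} [SeminormedAddGroup E] [IsUltrametricDist E] {a b : E}
    (ha : ‖a‖ ≤ 1) (hb : ‖b‖ ≤ 1) :
    ‖a - b‖ ≤ 1 := by
  rw [sub_eq_add_neg]
  exact (IsUltrametricDist.norm_add_le_max a (-b)).trans (max_le ha (by rwa [norm_neg]))

lemma eq_of_mem_F_of_sub_mem_Γ {y z : G} (hy : y ∈ F) (hz : z ∈ F) (h : y - z ∈ Γ) :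
    y = z := by
  obtain ⟨q, hq, hΔ⟩ := h
  have hℝ : (q : ℝ) = y.1 - z.1 := congrArg (·.1) hΔ
  have h₂ : (q : ℚ_[2]) = y.2.1 - z.2.1 := congrArg (·.2.1) hΔ
  have h₃ : (q : ℚ_[3]) = y.2.2 - z.2.2 := congrArg (·.2.2) hΔ
  have hden : q.den = 1 := den_eq_one_of_mem_zInv6 hq
    (h₂ ▸ norm_sub_le_one hy.2.1 hz.2.1) (h₃ ▸ norm_sub_le_one hy.2.2 hz.2.2)
  have habs : |(q.num : ℝ)| < 1 := by
    rw [← Rat.cast_intCast, (Rat.den_eq_one_iff q).1 hden, hℝ, abs_lt]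
    constructor <;> linarith [hy.1.1, hy.1.2, hz.1.1, hz.1.2]
  have hq0 : q = 0 := Rat.num_eq_zero.1 (Int.abs_lt_one_iff.1 (by exact_mod_cast habs))
  rw [← sub_eq_zero, ← hΔ, hq0]
  simp [Δ]

lemma add_mem_F {y : G} (hy : y ∈ F) {d : ℚ_[3]} (hd : ‖d‖ ≤ 1) :
    y + ((0 : ℝ), (0 : ℚ_[2]), d) ∈ F := by
  obtain ⟨hℝ, h₂, h₃⟩ := hy
  refine ⟨by simpa using hℝ, by simpa using h₂, ?_⟩
  exact (IsUltrametricDist.norm_add_le_max y.2.2 d).trans (max_le h₃ hd)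

lemma act_add_third (q : ℚ) (x : G) (c : ℚ_[3]) :
    act q (x + ((0 : ℝ), (0 : ℚ_[2]), c)) =
      act q x + ((0 : ℝ), (0 : ℚ_[2]), (q : ℚ_[3]) * c) := by
  simp only [act, Prod.fst_add, Prod.snd_add, add_zero, mul_add, Prod.mk_add_mk]

lemma rep_add_third {rep : G → G} (hrep : ∀ x : G, rep x ∈ F ∧ x - rep x ∈ Γ) (y : G)
    {d : ℚ_[3]} (hd : ‖d‖ ≤ 1) :
    rep (y + ((0 : ℝ), (0 : ℚ_[2]), d)) = rep y + ((0 : ℝ), (0 : ℚ_[2]), d) := by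
  refine eq_of_mem_F_of_sub_mem_Γ (hrep _).1 (add_mem_F (hrep y).1 hd) ?_
  set t : G := ((0 : ℝ), (0 : ℚ_[2]), d)
  rw [show rep (y + t) - (rep y + t) = (y - rep y) - (y + t - rep (y + t)) by abel]
  exact sub_mem_Γ_s18 (hrep y).2 (hrep _).2

lemma norm_two_zpow (n : ℤ) : ‖(2 : ℚ_[3]) ^ n‖ = 1 := by
  have h2 : ‖(2 : ℚ_[3])‖ = 1 := by
    exact_mod_cast Padic.norm_natCast_eq_one_iff (p := 3) (n := 2) |>.2 (by norm_num)
  rw [norm_zpow, h2, one_zpow]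

/-- All iterates of multiplication by `2` on `G/Γ` commute with translation by
`(0,0,c)` for `c ∈ ℤ₃`: `rep(2^n(x+(0,0,c))) = rep(2^n x) + (0,0,2^n c)`.
Consequently, for `c ≠ 0` the distinct points `x` and `x+(0,0,c)` of `F` lie in the
same atom of `ξ^{(1,0)} = {[0,1/2) × ℤ₂ × ℤ₃, [1/2,1) × ℤ₂ × ℤ₃}` under every forward
and backward iterate of multiplication by `2`; in particular `ξ^{(1,0)}` is not
generating for multiplication by `2`. -/
theorem xi_one_zero_not_generating (rep : G → G)
    (hrep : ∀ x : G, rep x ∈ F ∧ x - rep x ∈ Γ)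
    (x : G) (hx : x ∈ F) (c : ℚ_[3]) (hc : ‖c‖ ≤ 1) :
    (∀ n : ℤ, rep (act ((2 : ℚ) ^ n) (x + ((0 : ℝ), (0 : ℚ_[2]), c))) =
      rep (act ((2 : ℚ) ^ n) x) + ((0 : ℝ), (0 : ℚ_[2]), (2 : ℚ_[3]) ^ n * c)) ∧
    (c ≠ 0 →
      x + ((0 : ℝ), (0 : ℚ_[2]), c) ∈ F ∧
      x + ((0 : ℝ), (0 : ℚ_[2]), c) ≠ x ∧
      ∀ n : ℤ,
        ((rep (act ((2 : ℚ) ^ n) (x + ((0 : ℝ), (0 : ℚ_[2]), c)))).1 < 1 / 2 ↔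
          (rep (act ((2 : ℚ) ^ n) x)).1 < 1 / 2)) := by
  have equivariant : ∀ n : ℤ, rep (act ((2 : ℚ) ^ n) (x + ((0 : ℝ), (0 : ℚ_[2]), c))) =
      rep (act ((2 : ℚ) ^ n) x) + ((0 : ℝ), (0 : ℚ_[2]), (2 : ℚ_[3]) ^ n * c) := by
    intro n
    have hnorm : ‖(2 : ℚ_[3]) ^ n * c‖ ≤ 1 := by rwa [norm_mul, norm_two_zpow, one_mul]
    rw [act_add_third, Rat.cast_zpow, Rat.cast_ofNat, rep_add_third hrep _ hnorm]
  refine ⟨equivariant, fun hc0 => ⟨add_mem_F hx hc, ?_, fun n => ?_⟩⟩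
  · simpa [Prod.ext_iff] using hc0
  · simp only [equivariant n, Prod.fst_add, add_zero]
end
end
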